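/- For any element X of a real inner product space and any closed convex cone C, X decomposes as X = Π_C(X) - Π_{C*}(-X), where Π_C denotes the metric projection onto C and C* = {y : ⟨y, x⟩ ≥ 0 for all x ∈ C} is the dual cone. -/

import Mathlib

/-!
Let `p = Π_C(X)`. Since `C` is a convex cone, the variational inequality characterising `p`
splits into `⟪X - p, p⟫ = 0` and `⟪X - p, z⟫ ≤ 0` for all `z ∈ C`. These say precisely that
`p - X` lies in `C*` and satisfies the variational inequality of the projection of `-X` onto `C*`;
as that inequality has at most one solution, `Π_{C*}(-X) = p - X`.
-/

open scoped InnerProductSpace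

section

variable {H : Type*} [NormedAddCommGroup H] [InnerProductSpace ℝ H]

theorem inner_sub_sub_nonpos_of_forall_norm_sub_le {K : Set H} (hK : Convex ℝ K) {w p : H}
    (hp : p ∈ K) (hmin : ∀ y ∈ K, ‖w - p‖ ≤ ‖w - y‖) : ∀ y ∈ K, ⟪w - p, y - p⟫_ℝ ≤ 0 := by
  have : Nonempty K := ⟨⟨p, hp⟩⟩
  refine (norm_eq_iInf_iff_real_inner_le_zero hK hp).1
    (le_antisymm (le_ciInf fun y => hmin y y.2) ?_)
  exact ciInf_le (f := fun y : K => ‖w - y‖) ⟨0, fun _ ⟨_, hy⟩ => hy ▸ norm_nonneg _⟩ ⟨p, hp⟩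

theorem eq_of_inner_sub_sub_nonpos {w p q : H} (hp : ⟪w - p, q - p⟫_ℝ ≤ 0)
    (hq : ⟪w - q, p - q⟫_ℝ ≤ 0) : p = q := by
  have hsum : ⟪p - q, p - q⟫_ℝ = ⟪w - p, q - p⟫_ℝ + ⟪w - q, p - q⟫_ℝ := by
    simp only [inner_sub_left, inner_sub_right, real_inner_comm p q]
    ring
  exact sub_eq_zero.mp (real_inner_self_nonpos.mp (by linarith))

theorem setOf_forall_inner_nonneg_eq_dual_innerₗ (C : Set H) :
    {y : H | ∀ z ∈ C, 0 ≤ ⟪y, z⟫_ℝ} = PointedCone.dual (innerₗ H) C := by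
  ext y
  simp [real_inner_comm]

section Cone

variable {C : Set H} (hcone : ∀ x ∈ C, ∀ t : ℝ, 0 ≤ t → t • x ∈ C) {w p : H} (hp : p ∈ C)
  (hvar : ∀ y ∈ C, ⟪w - p, y - p⟫_ℝ ≤ 0)
include hcone hp hvar

theorem inner_sub_self_eq_zero_of_cone : ⟪w - p, p⟫_ℝ = 0 := by
  have h0 := hvar _ (hcone p hp 0 le_rfl)
  have h2 := hvar _ (hcone p hp 2 zero_le_two)
  simp only [zero_smul, zero_sub, inner_neg_right, two_smul, add_sub_cancel_right] at h0 h2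
  linarith

theorem inner_sub_nonpos_of_convex_cone (hconv : Convex ℝ C) {z : H} (hz : z ∈ C) :
    ⟪w - p, z⟫_ℝ ≤ 0 := by
  have hmid : (1 / 2 : ℝ) • p + (1 / 2 : ℝ) • z ∈ C := hconv hp hz (by norm_num) (by norm_num)
    (by norm_num)
  have hpz : p + z ∈ C := by
    simpa [smul_add, smul_smul] using hcone _ hmid 2 zero_le_two
  simpa using hvar _ hpz

theorem sub_mem_dual_of_convex_cone (hconv : Convex ℝ C) :
    p - w ∈ PointedCone.dual (innerₗ H) C := by
  intro z hz
  have := inner_sub_nonpos_of_convex_cone hcone hp hvar hconv hz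
  change 0 ≤ ⟪z, p - w⟫_ℝ
  rw [← neg_sub, inner_neg_right, real_inner_comm]
  linarith

theorem inner_neg_sub_sub_nonpos_dual {y : H} (hy : y ∈ PointedCone.dual (innerₗ H) C) :
    ⟪-w - (p - w), y - (p - w)⟫_ℝ ≤ 0 := by
  have hpy : 0 ≤ ⟪p, y⟫_ℝ := hy hp
  have hwp := inner_sub_self_eq_zero_of_cone hcone hp hvar
  rw [show -w - (p - w) = -p by abel]
  simp only [inner_neg_left, inner_sub_left, inner_sub_right] at hwp ⊢
  linarith [real_inner_comm p w]

end Cone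

end

theorem moreau_decomposition_general {H : Type*} [NormedAddCommGroup H] [InnerProductSpace ℝ H]
    (C : Set H) (hCconv : Convex ℝ C)
    (hCcone : ∀ x ∈ C, ∀ t : ℝ, 0 ≤ t → t • x ∈ C)
    (projC projD : H → H)
    (hprojC : ∀ x, projC x ∈ C ∧ ∀ y ∈ C, ‖x - projC x‖ ≤ ‖x - y‖)
    (hprojD : ∀ x, projD x ∈ {y : H | ∀ z ∈ C, 0 ≤ (inner ℝ y z : ℝ)} ∧
        ∀ y ∈ {y : H | ∀ z ∈ C, 0 ≤ (inner ℝ y z : ℝ)}, ‖x - projD x‖ ≤ ‖x - y‖)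
    (X : H) : X = projC X - projD (-X) := by
  simp only [setOf_forall_inner_nonneg_eq_dual_innerₗ] at hprojD
  obtain ⟨hpC, hpmin⟩ := hprojC X
  obtain ⟨hqK, hqmin⟩ := hprojD (-X)
  have hvarC := inner_sub_sub_nonpos_of_forall_norm_sub_le hCconv hpC hpmin
  have hvarK :=
    inner_sub_sub_nonpos_of_forall_norm_sub_le (PointedCone.dual (innerₗ H) C).convex hqK hqmin
  have hq : projC X - X = projD (-X) :=
    eq_of_inner_sub_sub_nonpos (inner_neg_sub_sub_nonpos_dual hCcone hpC hvarC hqK)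
      (hvarK _ (sub_mem_dual_of_convex_cone hCcone hpC hvarC hCconv))
  rw [← hq, sub_sub_cancel]

/-- Moreau decomposition: `X = Π_C(X) - Π_{C*}(-X)` for a closed convex cone `C`. -/
theorem moreau_decomposition {H : Type*} [NormedAddCommGroup H] [InnerProductSpace ℝ H]
    (C : Set H) (hCne : C.Nonempty) (hCcl : IsClosed C) (hCconv : Convex ℝ C)
    (hCcone : ∀ x ∈ C, ∀ t : ℝ, 0 ≤ t → t • x ∈ C)
    (projC projD : H → H)
    (hprojC : ∀ x, projC x ∈ C ∧ ∀ y ∈ C, ‖x - projC x‖ ≤ ‖x - y‖)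
    (hprojD : ∀ x, projD x ∈ {y : H | ∀ z ∈ C, 0 ≤ (inner ℝ y z : ℝ)} ∧
        ∀ y ∈ {y : H | ∀ z ∈ C, 0 ≤ (inner ℝ y z : ℝ)}, ‖x - projD x‖ ≤ ‖x - y‖)
    (X : H) : X = projC X - projD (-X) :=
  moreau_decomposition_general C hCconv hCcone projC projD hprojC hprojD X
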